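/- arXiv:1810.05679 — 2 statements merged into one kernel-verified Lean document; each statement's English description precedes it below -/
import Mathlib

section
/- Let X, Y, Z be nonzero vectors in R^p. If cos(X,Y) ≥ 1 - α and cos(Y,Z) ≤ β with α ≥ 0, then cos(X,Z) ≤ β + sqrt(2α). -/
/-!
Normalize the three vectors to `u, v, w`, all of norm at most `1`. Then
`cos(X,Z) = ⟪u,w⟫ = ⟪v,w⟫ + ⟪u - v, w⟫ ≤ β + ‖u - v‖`, and `‖u - v‖² ≤ 2 - 2⟪u,v⟫ ≤ 2α`.
-/

open NormedSpace
open scoped RealInnerProductSpace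

namespace NormedSpace

variable {E : Type*} [NormedAddCommGroup E] [InnerProductSpace ℝ E]

theorem norm_normalize_le_one (x : E) : ‖normalize x‖ ≤ 1 := by
  rcases eq_or_ne x 0 with rfl | hx
  · simp
  · exact (norm_normalize hx).le

theorem real_inner_normalize_normalize (x y : E) :
    ⟪normalize x, normalize y⟫ = ⟪x, y⟫ / (‖x‖ * ‖y‖) := by
  rw [normalize, normalize, real_inner_smul_left, real_inner_smul_right, div_eq_mul_inv, mul_inv]
  ring

end NormedSpace

section UnitBall

variable {E : Type*} [NormedAddCommGroup E] [InnerProductSpace ℝ E] {u v w : E}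

theorem norm_sub_sq_le_two_mul_one_sub_inner (hu : ‖u‖ ≤ 1) (hv : ‖v‖ ≤ 1) :
    ‖u - v‖ ^ 2 ≤ 2 * (1 - ⟪u, v⟫) := by
  rw [norm_sub_sq_real]
  nlinarith [norm_nonneg u, norm_nonneg v]

theorem real_inner_le_real_inner_add_sqrt (hu : ‖u‖ ≤ 1) (hv : ‖v‖ ≤ 1) (hw : ‖w‖ ≤ 1) :
    ⟪u, w⟫ ≤ ⟪v, w⟫ + √(2 * (1 - ⟪u, v⟫)) := by
  have hdist : ‖u - v‖ ≤ √(2 * (1 - ⟪u, v⟫)) :=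
    Real.le_sqrt_of_sq_le (norm_sub_sq_le_two_mul_one_sub_inner hu hv)
  calc ⟪u, w⟫ = ⟪v, w⟫ + ⟪u - v, w⟫ := by rw [inner_sub_left]; ring
    _ ≤ ⟪v, w⟫ + ‖u - v‖ * ‖w‖ := by gcongr; exact real_inner_le_norm _ _
    _ ≤ ⟪v, w⟫ + √(2 * (1 - ⟪u, v⟫)) := by
      gcongr
      exact mul_le_of_le_one_right (norm_nonneg _) hw |>.trans hdist

end UnitBall

theorem cos_upper_bound_of_cos_bounds_general {p : ℕ} (X Y Z : EuclideanSpace ℝ (Fin p))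
    (α β : ℝ)
    (hXY : 1 - α ≤ (inner ℝ X Y : ℝ) / (‖X‖ * ‖Y‖))
    (hYZ : (inner ℝ Y Z : ℝ) / (‖Y‖ * ‖Z‖) ≤ β) :
    (inner ℝ X Z : ℝ) / (‖X‖ * ‖Z‖) ≤ β + Real.sqrt (2 * α) := by
  rw [← real_inner_normalize_normalize] at hXY hYZ ⊢
  calc ⟪normalize X, normalize Z⟫
      ≤ ⟪normalize Y, normalize Z⟫ + √(2 * (1 - ⟪normalize X, normalize Y⟫)) :=
        real_inner_le_real_inner_add_sqrt (norm_normalize_le_one X) (norm_normalize_le_one Y)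
          (norm_normalize_le_one Z)
    _ ≤ β + √(2 * α) := by gcongr; linarith

/-- If `cos(X,Y) ≥ 1 - α` and `cos(Y,Z) ≤ β` for nonzero vectors `X, Y, Z ∈ ℝ^p`
with `α ≥ 0`, then `cos(X,Z) ≤ β + √(2α)`, where
`cos(u,v) = ⟨u,v⟩ / (‖u‖ ‖v‖)` is the cosine similarity. -/
theorem cos_upper_bound_of_cos_bounds {p : ℕ} (X Y Z : EuclideanSpace ℝ (Fin p))
    (hX : X ≠ 0) (hY : Y ≠ 0) (hZ : Z ≠ 0) (α β : ℝ) (hα : 0 ≤ α)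
    (hXY : 1 - α ≤ (inner ℝ X Y : ℝ) / (‖X‖ * ‖Y‖))
    (hYZ : (inner ℝ Y Z : ℝ) / (‖Y‖ * ‖Z‖) ≤ β) :
    (inner ℝ X Z : ℝ) / (‖X‖ * ‖Z‖) ≤ β + Real.sqrt (2 * α) :=
  cos_upper_bound_of_cos_bounds_general X Y Z α β hXY hYZ
end

section
/- Let X be an n × p matrix with σ_p(X) > 0, W a p × p orthogonal matrix, Π an n × n matrix with each row of ΠX of unit norm and m rows of Π differing from the identity, and V an n × p matrix. Set Δ = γ X^T(Π − I)X W + X^T V for γ ∈ (0,1]. If γ σ_p(X)^2 > 2γm + ||X^T V||_F, then the polar factor Ŵ = U(X^T Y) of X^T Y, where Y = γ Π X W + V, satisfies ||Ŵ − W||_F ≤ (2γm + ||X^T V||_F)/(γ σ_p(X)^2 − 2γm − ||X^T V||_F). -/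
open Matrix

/-- Euclidean norm of a vector in `ℝ^k` given as a function. -/
noncomputable def vecNorm {k : ℕ} (v : Fin k → ℝ) : ℝ := Real.sqrt (∑ i, v i ^ 2)

/-- Frobenius norm of a real matrix. -/
noncomputable def frobNorm {a b : ℕ} (M : Matrix (Fin a) (Fin b) ℝ) : ℝ :=
  Real.sqrt (∑ i, ∑ j, M i j ^ 2)

theorem Matrix.isHermitian_transpose_mul_self {m n : Type*} [Fintype m] (M : Matrix m n ℝ) :
    (Mᵀ * M).IsHermitian := by
  simpa using isHermitian_conjTranspose_mul_self M

noncomputable def Matrix.PosSemidef.sqrt {n : Type*} [Fintype n] [DecidableEq n]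
    {A : Matrix n n ℝ} (hA : A.PosSemidef) : Matrix n n ℝ :=
  hA.1.eigenvectorUnitary.1 * diagonal ((√·) ∘ hA.1.eigenvalues) *
    (star hA.1.eigenvectorUnitary : Matrix n n ℝ)

/-- The squared smallest singular value `σ_p(M)²`: the smallest eigenvalue of
`Mᵀ M`. -/
noncomputable def sigmaMinSq {m : Type*} [Fintype m] {p : ℕ}
    (M : Matrix m (Fin p) ℝ) : ℝ :=
  ⨅ j, (Matrix.isHermitian_transpose_mul_self M).eigenvalues j

/-- The polar factor `U(A) = A (Aᵀ A)^{-1/2}` of a square real matrix. -/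
noncomputable def polarFactor {a : ℕ} (A : Matrix (Fin a) (Fin a) ℝ) :
    Matrix (Fin a) (Fin a) ℝ :=
  A * (Matrix.PosSemidef.sqrt (Matrix.posSemidef_conjTranspose_mul_self A))⁻¹

/-!
Write `Xᵀ Y = W H + Δ` with `H = γ Wᵀ XᵀX W ≥ s := γ σ_p(X)²` and
`Δ = γ Xᵀ(Π - I)X W + XᵀV`. Only `m` rows of `(Π - I)X` are nonzero, each of norm at most `2`,
so `‖Δ‖_F ≤ β := 2γm + ‖XᵀV‖_F`. Hence `Xᵀ Y` has singular values at least `s - β > 0`, its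
modulus `|XᵀY| = ((XᵀY)ᵀ XᵀY)^{1/2}` is `≥ s - β`, and `Ŵ = XᵀY |XᵀY|⁻¹` is orthogonal. The
error `E = ŴᵀW - I` solves the Sylvester equation `|XᵀY| E + E H = ΔᵀW - ŴᵀΔ`; pairing it with
`E` in the Frobenius inner product gives `(2s - β)‖E‖² ≤ 2β‖E‖`, and `‖Ŵ - W‖_F = ‖E‖_F`.
-/

attribute [local instance] Matrix.frobeniusNormedAddCommGroup Matrix.frobeniusNormSMulClass

lemma vecNorm_eq_norm {k : ℕ} (v : Fin k → ℝ) : vecNorm v = ‖WithLp.toLp 2 v‖ := by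
  rw [vecNorm, EuclideanSpace.norm_eq]
  simp

lemma frobNorm_eq_norm {a b : ℕ} (M : Matrix (Fin a) (Fin b) ℝ) : frobNorm M = ‖M‖ := by
  rw [frobNorm, frobenius_norm_def, Real.sqrt_eq_rpow]
  simp

namespace Matrix

lemma transpose_eq_self_of_posSemidef_sub_smul_one {n : Type*} [DecidableEq n]
    {A : Matrix n n ℝ} {c : ℝ} (h : (A - c • 1).PosSemidef) : Aᵀ = A := by
  have hA := h.1.eq
  rwa [conjTranspose_eq_transpose_of_trivial, transpose_sub, transpose_smul, transpose_one,
    sub_left_inj] at hA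

section Frobenius

variable {m n : Type*} [Fintype m] [Fintype n]

lemma frobenius_norm_eq_norm_vec (M : Matrix m n ℝ) : ‖M‖ = ‖WithLp.toLp 2 M.vec‖ := by
  rw [frobenius_norm_def, EuclideanSpace.norm_eq, Real.sqrt_eq_rpow, Fintype.sum_prod_type,
    Finset.sum_comm]
  simp [vec]

lemma frobenius_norm_sq (M : Matrix m n ℝ) : ‖M‖ ^ 2 = (Mᵀ * M).trace := by
  rw [frobenius_norm_eq_norm_vec, ← real_inner_self_eq_norm_sq,
    EuclideanSpace.inner_eq_star_dotProduct]
  simp [vec_dotProduct_vec]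

lemma trace_transpose_mul_le (M N : Matrix m n ℝ) : (Mᵀ * N).trace ≤ ‖M‖ * ‖N‖ := by
  rw [frobenius_norm_eq_norm_vec, frobenius_norm_eq_norm_vec, ← vec_dotProduct_vec]
  refine le_trans (le_of_eq ?_) (real_inner_le_norm (WithLp.toLp 2 M.vec) (WithLp.toLp 2 N.vec))
  simp [EuclideanSpace.inner_eq_star_dotProduct, dotProduct_comm]

lemma frobenius_norm_orthogonal_mul [DecidableEq m] {Q : Matrix m m ℝ} (hQ : Qᵀ * Q = 1)
    (M : Matrix m n ℝ) : ‖Q * M‖ = ‖M‖ := by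
  rw [← sq_eq_sq₀ (norm_nonneg _) (norm_nonneg _), frobenius_norm_sq, frobenius_norm_sq,
    transpose_mul, Matrix.mul_assoc, ← Matrix.mul_assoc Qᵀ, hQ, Matrix.one_mul]

lemma frobenius_norm_mul_orthogonal [DecidableEq n] {Q : Matrix n n ℝ} (hQ : Q * Qᵀ = 1)
    (M : Matrix m n ℝ) : ‖M * Q‖ = ‖M‖ := by
  rw [← frobenius_norm_transpose, transpose_mul,
    frobenius_norm_orthogonal_mul (by simpa using hQ), frobenius_norm_transpose]

lemma norm_sub_eq_norm_transpose_mul_sub_one [DecidableEq m] {U : Matrix m m ℝ}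
    (hU : Uᵀ * U = 1) (W : Matrix m m ℝ) : ‖U - W‖ = ‖Uᵀ * W - 1‖ := by
  have hUE : U * (Uᵀ * W - 1) = W - U := by
    rw [Matrix.mul_sub, ← Matrix.mul_assoc, mul_eq_one_comm.mp hU, Matrix.one_mul, Matrix.mul_one]
  rw [norm_sub_rev, ← hUE, frobenius_norm_orthogonal_mul hU]

lemma norm_mulVec_le (M : Matrix m n ℝ) (x : n → ℝ) :
    ‖WithLp.toLp 2 (M *ᵥ x)‖ ≤ ‖M‖ * ‖WithLp.toLp 2 x‖ := by
  rw [← frobenius_norm_replicateCol (ι := Unit), ← frobenius_norm_replicateCol (ι := Unit),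
    replicateCol_mulVec]
  exact frobenius_norm_mul _ _

lemma norm_orthogonal_mulVec [DecidableEq m] {Q : Matrix m m ℝ} (hQ : Qᵀ * Q = 1) (x : m → ℝ) :
    ‖WithLp.toLp 2 (Q *ᵥ x)‖ = ‖WithLp.toLp 2 x‖ := by
  rw [← frobenius_norm_replicateCol (ι := Unit), replicateCol_mulVec,
    frobenius_norm_orthogonal_mul hQ, frobenius_norm_replicateCol]

lemma norm_vecMulVec_le (a : m → ℝ) (b : n → ℝ) :
    ‖vecMulVec a b‖ ≤ ‖WithLp.toLp 2 a‖ * ‖WithLp.toLp 2 b‖ := by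
  rw [vecMulVec_eq Unit, ← frobenius_norm_replicateCol (ι := Unit),
    ← frobenius_norm_replicateRow (ι := Unit)]
  exact frobenius_norm_mul _ _

end Frobenius

section LowerBound

variable {n k : Type*} [Fintype n] [DecidableEq n] [Fintype k] {A : Matrix n n ℝ} {c s : ℝ}

lemma posSemidef_conj_diagonal_sub_smul_one {U : Matrix n n ℝ} (hU : U ∈ unitaryGroup n ℝ)
    {d : n → ℝ} (hd : ∀ i, c ≤ d i) : (U * diagonal d * star U - c • 1).PosSemidef := by
  have hc : (c • 1 : Matrix n n ℝ) = U * diagonal (fun _ => c) * star U := by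
    rw [← smul_one_eq_diagonal, Matrix.mul_smul, Matrix.mul_one, Matrix.smul_mul,
      mem_unitaryGroup_iff.mp hU]
  rw [hc, ← Matrix.sub_mul, ← Matrix.mul_sub, diagonal_sub]
  exact (posSemidef_diagonal_iff.mpr fun i => sub_nonneg.mpr (hd i)).mul_mul_conjTranspose_same U

lemma IsHermitian.posSemidef_sub_smul_one (hA : A.IsHermitian) (h : ∀ i, c ≤ hA.eigenvalues i) :
    (A - c • 1).PosSemidef := by
  rw [hA.spectral_theorem, Unitary.conjStarAlgAut_apply, RCLike.ofReal_real_eq_id,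
    Function.id_comp]
  exact posSemidef_conj_diagonal_sub_smul_one (SetLike.coe_mem _) h

lemma posSemidef_transpose_mul_mul_sub_smul_one {W : Matrix n n ℝ} (hW : Wᵀ * W = 1)
    (h : (A - c • 1).PosSemidef) : (Wᵀ * A * W - c • 1).PosSemidef := by
  have := h.conjTranspose_mul_mul_same W
  rwa [conjTranspose_eq_transpose_of_trivial, Matrix.mul_sub, Matrix.sub_mul, Matrix.mul_smul,
    Matrix.smul_mul, Matrix.mul_one, hW] at this

lemma mul_dotProduct_self_le_of_posSemidef_sub_smul_one (h : (A - c • 1).PosSemidef) (x : n → ℝ) :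
    c * (x ⬝ᵥ x) ≤ x ⬝ᵥ A *ᵥ x := by
  have := h.dotProduct_mulVec_nonneg x
  rw [star_trivial, sub_mulVec, smul_mulVec, one_mulVec, dotProduct_sub, dotProduct_smul,
    smul_eq_mul] at this
  linarith

lemma mul_trace_le_of_posSemidef_sub_smul_one (h : (A - c • 1).PosSemidef) (M : Matrix n k ℝ) :
    c * (Mᵀ * M).trace ≤ (Mᵀ * A * M).trace := by
  have := (h.conjTranspose_mul_mul_same M).trace_nonneg
  rw [conjTranspose_eq_transpose_of_trivial, Matrix.mul_sub, Matrix.sub_mul, trace_sub,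
    Matrix.mul_smul, Matrix.smul_mul, Matrix.mul_one, trace_smul, smul_eq_mul] at this
  linarith

lemma mul_norm_le_norm_mulVec_of_posSemidef_sub_smul_one (h : (A - c • 1).PosSemidef) (x : n → ℝ) :
    c * ‖WithLp.toLp 2 x‖ ≤ ‖WithLp.toLp 2 (A *ᵥ x)‖ := by
  rcases (norm_nonneg (WithLp.toLp 2 x)).eq_or_lt with hx | hx
  · rw [← hx, mul_zero]
    exact norm_nonneg _
  refine le_of_mul_le_mul_right ?_ hx
  calc c * ‖WithLp.toLp 2 x‖ * ‖WithLp.toLp 2 x‖ = c * (x ⬝ᵥ x) := by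
        rw [mul_assoc, ← sq, ← real_inner_self_eq_norm_sq,
          EuclideanSpace.inner_eq_star_dotProduct]
        simp
    _ ≤ x ⬝ᵥ A *ᵥ x := mul_dotProduct_self_le_of_posSemidef_sub_smul_one h x
    _ ≤ ‖WithLp.toLp 2 (A *ᵥ x)‖ * ‖WithLp.toLp 2 x‖ := by
        refine le_trans (le_of_eq ?_) (real_inner_le_norm (WithLp.toLp 2 (A *ᵥ x)) _)
        simp [EuclideanSpace.inner_eq_star_dotProduct]

lemma mul_norm_le_norm_mulVec_mul_add {W H Δ : Matrix n n ℝ} (hW : Wᵀ * W = 1)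
    (hH : (H - s • 1).PosSemidef) (x : n → ℝ) :
    (s - ‖Δ‖) * ‖WithLp.toLp 2 x‖ ≤ ‖WithLp.toLp 2 ((W * H + Δ) *ᵥ x)‖ := by
  have hHx := mul_norm_le_norm_mulVec_of_posSemidef_sub_smul_one hH x
  have hΔx := norm_mulVec_le Δ x
  have hWHx : ‖WithLp.toLp 2 ((W * H) *ᵥ x)‖ = ‖WithLp.toLp 2 (H *ᵥ x)‖ := by
    rw [← mulVec_mulVec, norm_orthogonal_mulVec hW]
  have htri : ‖WithLp.toLp 2 ((W * H) *ᵥ x)‖ - ‖WithLp.toLp 2 (Δ *ᵥ x)‖ ≤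
      ‖WithLp.toLp 2 ((W * H + Δ) *ᵥ x)‖ := by
    simpa [add_mulVec] using
      norm_sub_norm_le (WithLp.toLp 2 ((W * H) *ᵥ x)) (-WithLp.toLp 2 (Δ *ᵥ x))
  linarith

lemma add_mul_norm_sq_le_trace_sylvester {S H : Matrix n n ℝ} (hS : (S - c • 1).PosSemidef)
    (hH : (H - s • 1).PosSemidef) (E : Matrix n n ℝ) :
    (c + s) * ‖E‖ ^ 2 ≤ (Eᵀ * (S * E + E * H)).trace := by
  have hSE := mul_trace_le_of_posSemidef_sub_smul_one hS E
  have hEH := mul_trace_le_of_posSemidef_sub_smul_one hH Eᵀ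
  rw [transpose_transpose, trace_mul_comm (E * H)] at hEH
  have hEE : ‖E‖ ^ 2 = (E * Eᵀ).trace := by rw [trace_mul_comm, ← frobenius_norm_sq]
  rw [Matrix.mul_add, trace_add, ← Matrix.mul_assoc, add_mul]
  nth_rw 2 [hEE]
  rw [frobenius_norm_sq]
  linarith

end LowerBound

section PolarFactor

variable {n : Type*} [Fintype n] [DecidableEq n]

lemma PosSemidef.sqrt_mul_self {A : Matrix n n ℝ} (hA : A.PosSemidef) :
    hA.sqrt * hA.sqrt = A := by
  have hD : diagonal ((√·) ∘ hA.1.eigenvalues) * diagonal ((√·) ∘ hA.1.eigenvalues)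
      = diagonal (RCLike.ofReal ∘ hA.1.eigenvalues) := by
    rw [diagonal_mul_diagonal, RCLike.ofReal_real_eq_id, Function.id_comp]
    exact congrArg diagonal (funext fun i => Real.mul_self_sqrt (hA.eigenvalues_nonneg i))
  conv_rhs => rw [hA.1.spectral_theorem, Unitary.conjStarAlgAut_apply, ← hD]
  simp only [PosSemidef.sqrt, Matrix.mul_assoc]
  rw [← Matrix.mul_assoc (star _) _, Unitary.coe_star_mul_self, Matrix.one_mul]

lemma PosSemidef.sqrt_sub_smul_one {A : Matrix n n ℝ} {c : ℝ} (hA : A.PosSemidef)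
    (h : ∀ i, c ≤ √(hA.1.eigenvalues i)) : (hA.sqrt - c • 1).PosSemidef :=
  posSemidef_conj_diagonal_sub_smul_one (SetLike.coe_mem _) h

lemma sq_le_eigenvalues_conjTranspose_mul_self {m : Type*} [Fintype m] {B : Matrix m n ℝ}
    {c : ℝ} (hc : 0 ≤ c) (hB : ∀ x, c * ‖WithLp.toLp 2 x‖ ≤ ‖WithLp.toLp 2 (B *ᵥ x)‖) (i : n) :
    c ^ 2 ≤ (isHermitian_conjTranspose_mul_self B).eigenvalues i := by
  set hBB := isHermitian_conjTranspose_mul_self B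
  set u := hBB.eigenvectorBasis i
  have hu : ‖u‖ = 1 := hBB.eigenvectorBasis.orthonormal.1 i
  have hBu : c ≤ ‖WithLp.toLp 2 (B *ᵥ u)‖ := by simpa [hu] using hB u
  have hquad : ∀ v : n → ℝ, star v ⬝ᵥ (Bᴴ * B) *ᵥ v = (B *ᵥ v) ⬝ᵥ (B *ᵥ v) := fun v => by
    rw [star_trivial, conjTranspose_eq_transpose_of_trivial, ← mulVec_mulVec, dotProduct_mulVec,
      vecMul_transpose]
  have hev : hBB.eigenvalues i = ‖WithLp.toLp 2 (B *ᵥ u)‖ ^ 2 := by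
    rw [hBB.eigenvalues_eq, hquad, ← real_inner_self_eq_norm_sq,
      EuclideanSpace.inner_eq_star_dotProduct]
    simp [u]
  rw [hev]
  exact pow_le_pow_left₀ hc hBu 2

noncomputable def polarModulus (B : Matrix n n ℝ) : Matrix n n ℝ :=
  (posSemidef_conjTranspose_mul_self B).sqrt

lemma polarModulus_mul_self (B : Matrix n n ℝ) : polarModulus B * polarModulus B = Bᵀ * B := by
  rw [polarModulus, PosSemidef.sqrt_mul_self, conjTranspose_eq_transpose_of_trivial]

lemma transpose_polarModulus (B : Matrix n n ℝ) : (polarModulus B)ᵀ = polarModulus B :=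
  transpose_eq_self_of_posSemidef_sub_smul_one <|
    PosSemidef.sqrt_sub_smul_one _ (c := 0) fun _ => Real.sqrt_nonneg _

lemma posSemidef_polarModulus_sub_smul_one {B : Matrix n n ℝ} {c : ℝ} (hc : 0 ≤ c)
    (hB : ∀ x, c * ‖WithLp.toLp 2 x‖ ≤ ‖WithLp.toLp 2 (B *ᵥ x)‖) :
    (polarModulus B - c • 1).PosSemidef :=
  PosSemidef.sqrt_sub_smul_one _ fun i =>
    Real.le_sqrt_of_sq_le (sq_le_eigenvalues_conjTranspose_mul_self hc hB i)

lemma isUnit_det_of_posSemidef_sub_smul_one {A : Matrix n n ℝ} {c : ℝ}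
    (h : (A - c • 1).PosSemidef) (hc : 0 < c) : IsUnit A.det := by
  have hA : A.PosDef := sub_add_cancel A (c • 1) ▸ PosDef.posSemidef_add h (PosDef.one.smul hc)
  exact (isUnit_iff_isUnit_det A).mp hA.isUnit

variable {p : ℕ} {B : Matrix (Fin p) (Fin p) ℝ}

lemma polarFactor_eq_mul_inv (B : Matrix (Fin p) (Fin p) ℝ) :
    polarFactor B = B * (polarModulus B)⁻¹ :=
  rfl

lemma transpose_polarFactor (B : Matrix (Fin p) (Fin p) ℝ) :
    (polarFactor B)ᵀ = (polarModulus B)⁻¹ * Bᵀ := by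
  rw [polarFactor_eq_mul_inv, transpose_mul, transpose_nonsing_inv, transpose_polarModulus]

lemma transpose_polarFactor_mul (hB : IsUnit (polarModulus B).det) :
    (polarFactor B)ᵀ * B = polarModulus B := by
  rw [transpose_polarFactor, Matrix.mul_assoc, ← polarModulus_mul_self, ← Matrix.mul_assoc,
    nonsing_inv_mul _ hB, Matrix.one_mul]

lemma polarModulus_mul_transpose_polarFactor (hB : IsUnit (polarModulus B).det) :
    polarModulus B * (polarFactor B)ᵀ = Bᵀ := by
  rw [transpose_polarFactor, ← Matrix.mul_assoc, mul_nonsing_inv _ hB, Matrix.one_mul]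

lemma transpose_polarFactor_mul_self (hB : IsUnit (polarModulus B).det) :
    (polarFactor B)ᵀ * polarFactor B = 1 := by
  nth_rw 2 [polarFactor_eq_mul_inv]
  rw [← Matrix.mul_assoc, transpose_polarFactor_mul hB, mul_nonsing_inv _ hB]

lemma polarFactor_error_sylvester {W H Δ : Matrix (Fin p) (Fin p) ℝ} (hW : Wᵀ * W = 1)
    (hH : Hᵀ = H) (hB : IsUnit (polarModulus (W * H + Δ)).det) :
    polarModulus (W * H + Δ) * ((polarFactor (W * H + Δ))ᵀ * W - 1) +
        ((polarFactor (W * H + Δ))ᵀ * W - 1) * H =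
      Δᵀ * W - (polarFactor (W * H + Δ))ᵀ * Δ := by
  have hWH : (polarFactor (W * H + Δ))ᵀ * (W * H) =
      polarModulus (W * H + Δ) - (polarFactor (W * H + Δ))ᵀ * Δ := by
    rw [← transpose_polarFactor_mul hB, Matrix.mul_add, add_sub_cancel_right]
  rw [Matrix.mul_sub, Matrix.sub_mul, ← Matrix.mul_assoc,
    polarModulus_mul_transpose_polarFactor hB, Matrix.mul_assoc, hWH, transpose_add,
    transpose_mul, hH, Matrix.add_mul, Matrix.mul_assoc, hW, Matrix.mul_one, Matrix.mul_one,
    Matrix.one_mul]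
  abel

theorem norm_polarFactor_sub_le {W H Δ : Matrix (Fin p) (Fin p) ℝ} {s β : ℝ}
    (hW : Wᵀ * W = 1) (hH : (H - s • 1).PosSemidef) (hΔ : ‖Δ‖ ≤ β) (hβs : β < s) :
    ‖polarFactor (W * H + Δ) - W‖ ≤ β / (s - β) := by
  set B := W * H + Δ
  set U := polarFactor B
  set E := Uᵀ * W - 1
  have hc : 0 < s - β := sub_pos.mpr hβs
  have hβ : 0 ≤ β := (norm_nonneg Δ).trans hΔ
  have hS : (polarModulus B - (s - β) • 1).PosSemidef :=
    posSemidef_polarModulus_sub_smul_one hc.le fun x =>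
      le_trans (by gcongr) (mul_norm_le_norm_mulVec_mul_add hW hH x)
  have hSdet := isUnit_det_of_posSemidef_sub_smul_one hS hc
  have hUU : Uᵀ * U = 1 := transpose_polarFactor_mul_self hSdet
  have hR : ‖Δᵀ * W - Uᵀ * Δ‖ ≤ 2 * β := by
    calc ‖Δᵀ * W - Uᵀ * Δ‖ ≤ ‖Δᵀ * W‖ + ‖Uᵀ * Δ‖ := norm_sub_le _ _
      _ = ‖Δ‖ + ‖Δ‖ := by
        rw [frobenius_norm_mul_orthogonal (mul_eq_one_comm.mp hW), frobenius_norm_transpose,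
          frobenius_norm_orthogonal_mul (by rw [transpose_transpose, mul_eq_one_comm, hUU])]
      _ ≤ 2 * β := by linarith
  have hkey : (2 * s - β) * ‖E‖ ^ 2 ≤ 2 * β * ‖E‖ := by
    calc (2 * s - β) * ‖E‖ ^ 2 = (s - β + s) * ‖E‖ ^ 2 := by ring
      _ ≤ (Eᵀ * (polarModulus B * E + E * H)).trace :=
        add_mul_norm_sq_le_trace_sylvester hS hH E
      _ = (Eᵀ * (Δᵀ * W - Uᵀ * Δ)).trace := by
        rw [polarFactor_error_sylvester hW (transpose_eq_self_of_posSemidef_sub_smul_one hH) hSdet]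
      _ ≤ ‖E‖ * ‖Δᵀ * W - Uᵀ * Δ‖ := trace_transpose_mul_le _ _
      _ ≤ 2 * β * ‖E‖ := (mul_le_mul_of_nonneg_left hR (norm_nonneg E)).trans_eq (mul_comm _ _)
  rw [norm_sub_eq_norm_transpose_mul_sub_one hUU, le_div_iff₀ hc]
  rcases (norm_nonneg E).eq_or_lt with hE | hE
  · rw [← hE, zero_mul]
    exact hβ
  · have hkey' : (2 * s - β) * ‖E‖ ≤ 2 * β := le_of_mul_le_mul_right (by linarith) hE
    nlinarith

end PolarFactor

section RowPerturbation

variable {n k l : Type*} [Fintype n]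

lemma transpose_mul_eq_sum_vecMulVec (X : Matrix n k ℝ) (Z : Matrix n l ℝ) :
    Xᵀ * Z = ∑ i, vecMulVec (X i) (Z i) := by
  ext a b
  simp [mul_apply, Matrix.sum_apply, vecMulVec_apply]

lemma norm_transpose_mul_mul_sub_le [DecidableEq n] [Fintype k] {X : Matrix n k ℝ}
    {P : Matrix n n ℝ} (hX : ∀ i, ‖WithLp.toLp 2 (X i)‖ ≤ 1)
    (hPX : ∀ i, ‖WithLp.toLp 2 ((P * X) i)‖ ≤ 1) (T : Finset n)
    (hT : ∀ i ∉ T, P i = (1 : Matrix n n ℝ) i) :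
    ‖Xᵀ * (P * X - X)‖ ≤ 2 * T.card := by
  have hrow : ∀ i ∉ T, (P * X - X) i = 0 := fun i hi => by
    ext j
    simp [mul_apply, hT i hi, one_apply]
  have hterm : ∀ i, ‖vecMulVec (X i) ((P * X - X) i)‖ ≤ 2 := fun i =>
    calc ‖vecMulVec (X i) ((P * X - X) i)‖
        ≤ ‖WithLp.toLp 2 (X i)‖ * ‖WithLp.toLp 2 ((P * X) i) - WithLp.toLp 2 (X i)‖ :=
          norm_vecMulVec_le _ _
      _ ≤ 1 * (1 + 1) := by
          gcongr
          · exact hX i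
          · exact (norm_sub_le _ _).trans (add_le_add (hPX i) (hX i))
      _ = 2 := by norm_num
  rw [transpose_mul_eq_sum_vecMulVec, ← Finset.sum_subset (Finset.subset_univ T)
    fun i _ hi => by rw [hrow i hi, vecMulVec_zero]]
  calc ‖∑ i ∈ T, vecMulVec (X i) ((P * X - X) i)‖
      ≤ ∑ i ∈ T, ‖vecMulVec (X i) ((P * X - X) i)‖ := norm_sum_le _ _
    _ ≤ ∑ _i ∈ T, (2 : ℝ) := Finset.sum_le_sum fun i _ => hterm i
    _ = 2 * T.card := by rw [Finset.sum_const, nsmul_eq_mul, mul_comm]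

end RowPerturbation

end Matrix

lemma posSemidef_transpose_mul_self_sub_sigmaMinSq {m : Type*} [Fintype m] {p : ℕ}
    (X : Matrix m (Fin p) ℝ) : (Xᵀ * X - sigmaMinSq X • 1).PosSemidef :=
  (isHermitian_transpose_mul_self X).posSemidef_sub_smul_one fun j =>
    ciInf_le (Set.finite_range _).bddBelow j

theorem initial_W_error_bound_general {n p : ℕ} (X : Matrix (Fin n) (Fin p) ℝ)
    (hrows : ∀ i, vecNorm (X i) = 1)
    (W : Matrix (Fin p) (Fin p) ℝ) (hW : W * Wᵀ = 1)
    (P : Matrix (Fin n) (Fin n) ℝ) (hPX : ∀ i, vecNorm ((P * X) i) = 1)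
    (m : ℕ)
    (hm : (@Finset.filter (Fin n) (fun i => P i ≠ (1 : Matrix (Fin n) (Fin n) ℝ) i)
      (fun _ => inferInstance) Finset.univ).card = m)
    (V : Matrix (Fin n) (Fin p) ℝ) (γ : ℝ) (hγ0 : 0 < γ)
    (Y : Matrix (Fin n) (Fin p) ℝ) (hY : Y = γ • (P * X * W) + V)
    (hgap : 2 * γ * m + frobNorm (Xᵀ * V) < γ * sigmaMinSq X) :
    frobNorm (polarFactor (Xᵀ * Y) - W) ≤
      (2 * γ * m + frobNorm (Xᵀ * V)) /
        (γ * sigmaMinSq X - 2 * γ * m - frobNorm (Xᵀ * V)) := by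
  have hWW : Wᵀ * W = 1 := mul_eq_one_comm.mp hW
  have hH : (γ • (Wᵀ * (Xᵀ * X) * W) - (γ * sigmaMinSq X) • 1).PosSemidef := by
    rw [mul_smul, ← smul_sub]
    exact (posSemidef_transpose_mul_mul_sub_smul_one hWW
      (posSemidef_transpose_mul_self_sub_sigmaMinSq X)).smul hγ0.le
  have hB : Xᵀ * Y = W * (γ • (Wᵀ * (Xᵀ * X) * W)) + (γ • (Xᵀ * (P * X - X) * W) + Xᵀ * V) := by
    rw [hY, Matrix.mul_smul, ← Matrix.mul_assoc W, ← Matrix.mul_assoc W, hW, Matrix.one_mul]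
    simp only [Matrix.mul_add, Matrix.mul_smul, Matrix.mul_sub, Matrix.sub_mul, Matrix.mul_assoc,
      smul_sub]
    abel
  have hΔ : ‖γ • (Xᵀ * (P * X - X) * W) + Xᵀ * V‖ ≤ 2 * γ * m + ‖Xᵀ * V‖ := by
    have h2m : ‖Xᵀ * (P * X - X)‖ ≤ 2 * m := by
      rw [← hm]
      exact norm_transpose_mul_mul_sub_le (fun i => (vecNorm_eq_norm (X i) ▸ hrows i).le)
        (fun i => (vecNorm_eq_norm _ ▸ hPX i).le) _ fun i hi => by simpa using hi
    calc ‖γ • (Xᵀ * (P * X - X) * W) + Xᵀ * V‖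
        ≤ ‖γ • (Xᵀ * (P * X - X) * W)‖ + ‖Xᵀ * V‖ := norm_add_le _ _
      _ = γ * ‖Xᵀ * (P * X - X)‖ + ‖Xᵀ * V‖ := by
          rw [norm_smul, Real.norm_of_nonneg hγ0.le, frobenius_norm_mul_orthogonal hW]
      _ ≤ 2 * γ * m + ‖Xᵀ * V‖ := by nlinarith
  simp only [frobNorm_eq_norm] at hgap ⊢
  rw [hB, sub_sub]
  exact norm_polarFactor_sub_le hWW hH hΔ hgap

/-- Error bound for the initial spherical regression estimator: with `X` having
unit-norm rows and `σ_p(X)² > 0`, `W` orthogonal, `P` a mapping matrix with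
unit-norm rows of `P X` and `m` rows differing from the identity, `V` a noise
matrix, `γ ∈ (0,1]`, and `Y = γ P X W + V`, if
`γ σ_p(X)² > 2γm + ‖Xᵀ V‖_F`, then the polar factor `Ŵ = U(Xᵀ Y)` satisfies
`‖Ŵ − W‖_F ≤ (2γm + ‖Xᵀ V‖_F)/(γ σ_p(X)² − 2γm − ‖Xᵀ V‖_F)`. -/
theorem initial_W_error_bound {n p : ℕ} (X : Matrix (Fin n) (Fin p) ℝ)
    (hrows : ∀ i, vecNorm (X i) = 1) (hσ : 0 < sigmaMinSq X)
    (W : Matrix (Fin p) (Fin p) ℝ) (hW : W * Wᵀ = 1)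
    (P : Matrix (Fin n) (Fin n) ℝ) (hPX : ∀ i, vecNorm ((P * X) i) = 1)
    (m : ℕ)
    (hm : (@Finset.filter (Fin n) (fun i => P i ≠ (1 : Matrix (Fin n) (Fin n) ℝ) i)
      (fun _ => inferInstance) Finset.univ).card = m)
    (V : Matrix (Fin n) (Fin p) ℝ) (γ : ℝ) (hγ0 : 0 < γ) (hγ1 : γ ≤ 1)
    (Y : Matrix (Fin n) (Fin p) ℝ) (hY : Y = γ • (P * X * W) + V)
    (hgap : 2 * γ * m + frobNorm (Xᵀ * V) < γ * sigmaMinSq X) :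
    frobNorm (polarFactor (Xᵀ * Y) - W) ≤
      (2 * γ * m + frobNorm (Xᵀ * V)) /
        (γ * sigmaMinSq X - 2 * γ * m - frobNorm (Xᵀ * V)) :=
  initial_W_error_bound_general X hrows W hW P hPX m hm V γ hγ0 Y hY hgap
end
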